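/- arXiv:0902.0672 — 2 statements merged into one kernel-verified Lean document; each statement's English description precedes it below -/
import Mathlib

section
/- The measure ‖z−w‖^{-4} dz dw on pairs of distinct points of ℝ² is invariant under the diagonal action of inversions: for every c ∈ ℝ², every r > 0, and every measurable function f : ℝ²×ℝ² → [0,∞], one has ∬_{z≠c, w≠c} f(ι_{c,r}(z), ι_{c,r}(w)) · ‖z−w‖^{-4} dz dw = ∬_{z≠c, w≠c} f(z,w) · ‖z−w‖^{-4} dz dw, where dz dw is Lebesgue measure on ℝ²×ℝ². Equivalently, the pushforward of the measure with density (z,w) ↦ ‖z−w‖^{-4} (restricted to pairs with z ≠ c and w ≠ c) under the map (z,w) ↦ (ι_{c,r}(z), ι_{c,r}(w)) equals that measure. -/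
/-!
The inversion `ι` with center `c` and radius `R` of an `n`-dimensional Euclidean space is
conformal: its derivative at `x` is `(R / ‖x - c‖)²` times a reflection, so its Jacobian is
`(R / ‖x - c‖)^(2n)`, and it scales the distance of `x` and `y` by `R² / (‖x - c‖ ‖y - c‖)`.
Hence the Jacobian factors of the diagonal action on pairs exactly compensate the change of the
density `‖x - y‖^(-2n)`, and the invariance follows from the change of variables formula in each
factor and Tonelli. The plane is the case `2n = 4`.
-/

open MeasureTheory Module
open scoped ENNReal

/-- The inversion of the plane with center `c` and radius `r`:
`ι_{c,r}(x) = c + (r²/‖x−c‖²)·(x−c)` (junk value `c` at `x = c`). -/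
noncomputable def inversion (c : ℂ) (r : ℝ) (x : ℂ) : ℂ :=
  c + (↑(r ^ 2) / ↑(‖x - c‖ ^ 2)) * (x - c)

theorem inversion_eq_euclideanGeometry_inversion (c : ℂ) (r : ℝ) :
    inversion c r = EuclideanGeometry.inversion c r := by
  ext1 x
  simp only [inversion, EuclideanGeometry.inversion, dist_eq_norm, vsub_eq_sub, vadd_eq_add,
    div_pow, Complex.real_smul]
  push_cast
  ring

theorem lintegral_prod_comp_of_lintegral_comp {α : Type*} [MeasurableSpace α] (μ : Measure α)
    [SFinite μ] (s : Set α) {φ : α → α} {J : α → ℝ≥0∞} (hφ : Measurable φ) (hJ : Measurable J)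
    (h : ∀ g : α → ℝ≥0∞, ∫⁻ x in s, J x * g (φ x) ∂μ = ∫⁻ x in s, g x ∂μ)
    {f : α × α → ℝ≥0∞} (hf : Measurable f) :
    ∫⁻ p in s ×ˢ s, J p.1 * J p.2 * f (φ p.1, φ p.2) ∂μ.prod μ =
      ∫⁻ p in s ×ˢ s, f p ∂μ.prod μ := by
  have hf_comp : Measurable fun p : α × α ↦ f (φ p.1, φ p.2) :=
    hf.comp ((hφ.comp measurable_fst).prodMk (hφ.comp measurable_snd))
  rw [← Measure.prod_restrict, lintegral_prod _ (by fun_prop), lintegral_prod _ hf.aemeasurable]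
  calc ∫⁻ x in s, ∫⁻ y in s, J x * J y * f (φ x, φ y) ∂μ ∂μ
      = ∫⁻ x in s, J x * ∫⁻ y in s, f (φ x, y) ∂μ ∂μ := by
        refine lintegral_congr fun x ↦ ?_
        simp_rw [mul_assoc]
        rw [lintegral_const_mul _ (by fun_prop), h fun y ↦ f (φ x, y)]
    _ = ∫⁻ x in s, ∫⁻ y in s, f (x, y) ∂μ ∂μ := h fun x ↦ ∫⁻ y in s, f (x, y) ∂μ

namespace EuclideanGeometry

variable {E : Type*} [NormedAddCommGroup E] [InnerProductSpace ℝ E]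

theorem image_inversion_compl_singleton {c : E} {R : ℝ} (hR : R ≠ 0) :
    inversion c R '' {c}ᶜ = {c}ᶜ := by
  rw [Set.image_compl_eq (inversion_bijective c hR), Set.image_singleton, inversion_self]

theorem inv_dist_inversion_inversion_pow {c x y : E} (hx : x ≠ c) (hy : y ≠ c) {R : ℝ}
    (hR : R ≠ 0) (n : ℕ) :
    ((R / dist x c) ^ 2) ^ n * ((R / dist y c) ^ 2) ^ n *
        (dist (inversion c R x) (inversion c R y) ^ (2 * n))⁻¹ =
      (dist x y ^ (2 * n))⁻¹ := by
  have hxc : dist x c ≠ 0 := dist_ne_zero.2 hx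
  have hyc : dist y c ≠ 0 := dist_ne_zero.2 hy
  rw [dist_inversion_inversion hx hy, ← pow_mul, ← pow_mul,
    show R ^ 2 / (dist x c * dist y c) = R / dist x c * (R / dist y c) by ring, mul_pow, mul_pow,
    mul_inv, ← mul_assoc, mul_inv_cancel₀ (by positivity), one_mul]

theorem measurable_inversion [MeasurableSpace E] [BorelSpace E] (c : E) (R : ℝ) :
    Measurable (inversion c R) := by
  unfold inversion
  fun_prop

variable [FiniteDimensional ℝ E]

theorem abs_det_smul_reflection (a : ℝ) (K : Submodule ℝ E) :
    |(a • (K.reflection : E →L[ℝ] E)).det| = |a| ^ finrank ℝ E := by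
  rw [ContinuousLinearMap.det, ContinuousLinearMap.toLinearMap_smul, LinearMap.det_smul,
    abs_mul, abs_pow]
  erw [K.det_reflection]
  simp

variable [MeasurableSpace E] [BorelSpace E]

theorem lintegral_compl_singleton_comp_inversion (μ : Measure E) [μ.IsAddHaarMeasure] (c : E)
    {R : ℝ} (hR : R ≠ 0) (g : E → ℝ≥0∞) :
    ∫⁻ x in {c}ᶜ, ENNReal.ofReal (((R / dist x c) ^ 2) ^ finrank ℝ E) * g (inversion c R x) ∂μ =
      ∫⁻ x in {c}ᶜ, g x ∂μ := by
  have hderiv : ∀ x ∈ ({c}ᶜ : Set E), HasFDerivWithinAt (inversion c R)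
      ((R / dist x c) ^ 2 • ((ℝ ∙ (x - c))ᗮ.reflection : E →L[ℝ] E)) {c}ᶜ x :=
    fun x hx ↦ (hasFDerivAt_inversion hx).hasFDerivWithinAt
  conv_rhs => rw [← image_inversion_compl_singleton hR]
  rw [lintegral_image_eq_lintegral_abs_det_fderiv_mul μ (measurableSet_singleton c).compl hderiv
    (inversion_injective c hR).injOn]
  simp_rw [abs_det_smul_reflection, abs_sq]

theorem setLIntegral_comp_inversion_mul_inv_dist_pow (μ : Measure E) [μ.IsAddHaarMeasure]
    (c : E) {R : ℝ} (hR : R ≠ 0) {f : E × E → ℝ≥0∞} (hf : Measurable f) :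
    ∫⁻ p in {c}ᶜ ×ˢ {c}ᶜ, f (inversion c R p.1, inversion c R p.2) *
        ENNReal.ofReal ((dist p.1 p.2 ^ (2 * finrank ℝ E))⁻¹) ∂μ.prod μ =
      ∫⁻ p in {c}ᶜ ×ˢ {c}ᶜ, f p * ENNReal.ofReal ((dist p.1 p.2 ^ (2 * finrank ℝ E))⁻¹)
        ∂μ.prod μ := by
  rw [← lintegral_prod_comp_of_lintegral_comp μ {c}ᶜ (measurable_inversion c R) (by fun_prop)
    (lintegral_compl_singleton_comp_inversion μ c hR)
    (f := fun q ↦ f q * ENNReal.ofReal ((dist q.1 q.2 ^ (2 * finrank ℝ E))⁻¹)) (by fun_prop)]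
  refine setLIntegral_congr_fun ((measurableSet_singleton c).compl.prod
    (measurableSet_singleton c).compl) fun p ⟨hx, hy⟩ ↦ ?_
  rw [mul_left_comm, ← ENNReal.ofReal_mul (by positivity), ← ENNReal.ofReal_mul (by positivity),
    inv_dist_inversion_inversion_pow hx hy hR]

end EuclideanGeometry

theorem measure_dist_pow_neg_four_inversion_invariant (c : ℂ) (r : ℝ) (hr : 0 < r)
    (f : ℂ × ℂ → ℝ≥0∞) (hf : Measurable f) :
    ∫⁻ p in {p : ℂ × ℂ | p.1 ≠ c ∧ p.2 ≠ c},
        f (inversion c r p.1, inversion c r p.2) * ENNReal.ofReal ((‖p.1 - p.2‖ ^ 4)⁻¹) =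
      ∫⁻ p in {p : ℂ × ℂ | p.1 ≠ c ∧ p.2 ≠ c},
        f p * ENNReal.ofReal ((‖p.1 - p.2‖ ^ 4)⁻¹) := by
  have h := EuclideanGeometry.setLIntegral_comp_inversion_mul_inv_dist_pow volume c hr.ne' hf
  rw [Complex.finrank_real_complex, ← Measure.volume_eq_prod] at h
  simp only [inversion_eq_euclideanGeometry_inversion, dist_eq_norm] at h ⊢
  exact h
end

section
/- Let S² denote the unit sphere {x ∈ ℝ³ : ‖x‖ = 1}, let A ⊂ S² be a nonempty compact connected set, and let z, w ∈ S² ∖ A with z ≠ w. Then the closed segment [z,w] meets the convex hull of A if and only if every 2-dimensional affine subspace P ⊂ ℝ³ containing both z and w meets A. (In the Klein model of hyperbolic 3-space this says: the geodesic with ideal endpoints z, w meets the hyperbolic convex hull of A exactly when no circle of S² through z and w is disjoint from A.) -/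
/-!
If a point of the chord `[z, w]` lies in the convex hull of `A`, then every plane `P` through `z`
and `w` meets `conv A`; writing `P` as a level set `f = c` of a linear functional, `f '' A` is
an interval (as `A` is connected) equal to `f '' conv A`, so it contains `c`.

Conversely, `conv A` is compact and lies in the closed unit ball, which meets the line through
`z` and `w` only in `[z, w]`. If `[z, w]` misses `conv A`, Hahn–Banach strictly separates `conv A`
from that line by a functional `f`; being bounded below on the line, `f` is constant on it, so
the plane `f = f z` contains `z` and `w` and misses `A`.
-/

open Module Set Metric

section Caratheodory

variable {E : Type*} [AddCommGroup E] [Module ℝ E] [FiniteDimensional ℝ E]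

theorem convexHull_eq_image_stdSimplex_prod_pi {s : Set E} (hs : s.Nonempty) {n : ℕ}
    (hn : finrank ℝ E + 1 ≤ n) :
    convexHull ℝ s = (fun q : (Fin n → ℝ) × (Fin n → E) => ∑ i, q.1 i • q.2 i) ''
      (stdSimplex ℝ (Fin n) ×ˢ univ.pi fun _ => s) := by
  classical
  obtain ⟨a₀, ha₀⟩ := hs
  refine Subset.antisymm (fun x hx => ?_) ?_
  · obtain ⟨ι, _, p, w, hps, hind, hw0, hw1, rfl⟩ := eq_pos_convex_span_of_mem_convexHull hx
    have hcard : Fintype.card ι ≤ Fintype.card (Fin n) := by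
      have := hind.card_le_finrank_succ.trans (Nat.succ_le_succ (Submodule.finrank_le _))
      simpa using this.trans hn
    obtain ⟨e⟩ := Function.Embedding.nonempty_of_card_le hcard
    -- pad the Carathéodory combination with zero weights on points outside the range of `e`
    refine ⟨(Function.extend e w 0, Function.extend e p fun _ => a₀),
      ⟨⟨fun j => ?_, ?_⟩, ?_⟩, ?_⟩
    · show 0 ≤ Function.extend e w 0 j
      by_cases hj : j ∈ range e
      · obtain ⟨i, rfl⟩ := hj
        exact (e.injective.extend_apply w 0 i).symm ▸ (hw0 i).le
      · exact (Function.extend_apply' w (0 : Fin n → ℝ) j hj).ge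
    · rw [← hw1]
      refine (Fintype.sum_of_injective e e.injective _ _ (fun j hj => ?_) fun i => ?_).symm
      · exact Function.extend_apply' _ _ _ hj
      · exact (e.injective.extend_apply _ _ _).symm
    · intro j _
      show Function.extend e p (fun _ => a₀) j ∈ s
      by_cases hj : j ∈ range e
      · obtain ⟨i, rfl⟩ := hj
        exact (e.injective.extend_apply p _ i).symm ▸ hps (mem_range_self i)
      · exact (Function.extend_apply' p _ j hj).symm ▸ ha₀
    · refine (Fintype.sum_of_injective e e.injective _ _ (fun j hj => ?_) fun i => ?_).symm
      · simp [Function.extend_apply' _ _ _ hj]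
      · simp [e.injective.extend_apply]
  · rintro x ⟨⟨c, p⟩, ⟨hc, hp⟩, rfl⟩
    exact (convex_convexHull ℝ s).sum_mem (fun i _ => hc.1 i) hc.2
      fun i _ => subset_convexHull ℝ s (hp i (mem_univ i))

theorem IsCompact.convexHull [TopologicalSpace E] [IsTopologicalAddGroup E] [ContinuousSMul ℝ E]
    {s : Set E} (hs : IsCompact s) : IsCompact (convexHull ℝ s) := by
  rcases s.eq_empty_or_nonempty with rfl | hne
  · simp
  rw [convexHull_eq_image_stdSimplex_prod_pi hne le_rfl]
  exact ((isCompact_stdSimplex ℝ _).prod (isCompact_univ_pi fun _ => hs)).image (by fun_prop)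

end Caratheodory

theorem Submodule.exists_dual_ker_eq_of_finrank_add_one_eq {K V : Type*} [Field K]
    [AddCommGroup V] [Module K V] [FiniteDimensional K V] (p : Submodule K V)
    (hp : finrank K p + 1 = finrank K V) : ∃ f : Dual K V, LinearMap.ker f = p := by
  obtain ⟨f, hf, hpf⟩ := p.exists_le_ker_of_lt_top (p.lt_top_of_finrank_lt_finrank (by omega))
  refine ⟨f, (Submodule.eq_of_le_of_finrank_eq hpf ?_).symm⟩
  have := Dual.finrank_ker_add_one_of_ne_zero hf
  omega

theorem IsPreconnected.image_convexHull {E : Type*} [AddCommGroup E] [Module ℝ E]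
    [TopologicalSpace E] {A : Set E} (hA : IsPreconnected A) (f : E →ₗ[ℝ] ℝ)
    (hf : Continuous f) : f '' convexHull ℝ A = f '' A := by
  rw [f.image_convexHull]
  exact (convex_iff_ordConnected.mpr (hA.image f hf.continuousOn).ordConnected).convexHull_eq

theorem AffineSubspace.direction_le_ker_of_forall_lt {E : Type*} [AddCommGroup E] [Module ℝ E]
    (Q : AffineSubspace ℝ E) (f : E →ₗ[ℝ] ℝ) {v : ℝ} (h : ∀ x ∈ Q, v < f x) :
    Q.direction ≤ LinearMap.ker f := by
  rcases (Q : Set E).eq_empty_or_nonempty with hQ | ⟨x, hx⟩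
  · simp [(Q.coe_eq_bot_iff).mp hQ]
  intro d hd
  by_contra hfd
  -- moving from `x` along `d`, `f` would reach the value `v`
  have := h (((v - f x) / f d) • d +ᵥ x)
    (Q.vadd_mem_of_mem_direction (Q.direction.smul_mem _ hd) hx)
  rw [vadd_eq_add, map_add, map_smul, smul_eq_mul, div_mul_cancel₀ _ hfd] at this
  linarith

section Hyperplanes

variable {E : Type*} [NormedAddCommGroup E] [NormedSpace ℝ E] [FiniteDimensional ℝ E]

theorem AffineSubspace.inter_nonempty_of_inter_convexHull_nonempty {A : Set E}
    (hA : IsPreconnected A) (P : AffineSubspace ℝ E)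
    (hP : finrank ℝ P.direction + 1 = finrank ℝ E)
    (h : ((P : Set E) ∩ convexHull ℝ A).Nonempty) :
    ((P : Set E) ∩ A).Nonempty := by
  obtain ⟨x, hxP, hxA⟩ := h
  obtain ⟨f, hf⟩ := P.direction.exists_dual_ker_eq_of_finrank_add_one_eq hP
  have hmem : ∀ y, y ∈ P ↔ f y = f x := fun y => by
    rw [← P.vsub_right_mem_direction_iff_mem hxP, ← hf, LinearMap.mem_ker, vsub_eq_sub, map_sub,
      sub_eq_zero]
  obtain ⟨a, haA, hfa⟩ : f x ∈ f '' A := by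
    rw [← hA.image_convexHull f f.continuous_of_finiteDimensional]
    exact mem_image_of_mem f hxA
  exact ⟨a, (hmem a).mpr hfa, haA⟩

theorem AffineSubspace.exists_hyperplane_le_disjoint {K : Set E} (hKconv : Convex ℝ K)
    (hK : IsCompact K) (hKne : K.Nonempty) (L : AffineSubspace ℝ E) {p : E} (hp : p ∈ L)
    (hKL : Disjoint K L) :
    ∃ P : AffineSubspace ℝ E,
      finrank ℝ P.direction + 1 = finrank ℝ E ∧ L ≤ P ∧ Disjoint K P := by
  obtain ⟨f, u, v, hfK, huv, hfL⟩ := geometric_hahn_banach_compact_closed hKconv hK L.convex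
    L.closed_of_finiteDimensional hKL
  have hker := L.direction_le_ker_of_forall_lt f.toLinearMap hfL
  obtain ⟨a, ha⟩ := hKne
  have hf : (f : Dual ℝ E) ≠ 0 := fun h0 => by
    have hfa : f a = 0 := LinearMap.congr_fun h0 a
    have hfp : f p = 0 := LinearMap.congr_fun h0 p
    linarith [hfK a ha, hfL p hp]
  have hmem : ∀ y, y ∈ AffineSubspace.mk' p (LinearMap.ker (f : Dual ℝ E)) ↔ f y = f p := by
    simp [AffineSubspace.mem_mk', sub_eq_zero]
  refine ⟨.mk' p (LinearMap.ker (f : Dual ℝ E)), ?_, fun y hy => ?_, ?_⟩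
  · rw [AffineSubspace.direction_mk']
    exact Dual.finrank_ker_add_one_of_ne_zero hf
  · exact (hmem y).mpr (by simpa [sub_eq_zero] using hker (L.vsub_mem_direction hy hp))
  · refine disjoint_left.mpr fun y hyK hyP => ?_
    have := hfK y hyK
    have := hfL p hp
    rw [SetLike.mem_coe, hmem] at hyP
    linarith

end Hyperplanes

theorem affineSpan_pair_inter_closedBall_subset_segment {V : Type*} [NormedAddCommGroup V]
    [NormedSpace ℝ V] [StrictConvexSpace ℝ V] {c z w : V} {r : ℝ} (hz : z ∈ sphere c r)
    (hw : w ∈ sphere c r) : (line[ℝ, z, w] : Set V) ∩ closedBall c r ⊆ segment ℝ z w := by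
  rintro x ⟨hxL, hxB⟩
  rcases eq_or_ne z w with rfl | hzw
  · rw [pair_eq_singleton, AffineSubspace.coe_affineSpan_singleton] at hxL
    rw [segment_same]
    exact hxL
  have hcol : Collinear ℝ {z, x, w} := by
    rw [insert_comm]
    exact collinear_insert_of_mem_affineSpan_pair hxL
  exact (hcol.wbtw_of_dist_eq_of_dist_le hz hxB hw hzw).mem_segment

theorem segment_meets_convexHull_iff_planes_meet_general
    (A : Set (EuclideanSpace ℝ (Fin 3)))
    (hA : A ⊆ Metric.sphere (0 : EuclideanSpace ℝ (Fin 3)) 1)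
    (hcomp : IsCompact A) (hconn : IsConnected A)
    (z w : EuclideanSpace ℝ (Fin 3))
    (hz : z ∈ Metric.sphere (0 : EuclideanSpace ℝ (Fin 3)) 1)
    (hw : w ∈ Metric.sphere (0 : EuclideanSpace ℝ (Fin 3)) 1) :
    (segment ℝ z w ∩ convexHull ℝ A).Nonempty ↔
      ∀ P : AffineSubspace ℝ (EuclideanSpace ℝ (Fin 3)),
        Module.finrank ℝ P.direction = 2 → z ∈ P → w ∈ P →
          ((P : Set (EuclideanSpace ℝ (Fin 3))) ∩ A).Nonempty := by
  have hdim : finrank ℝ (EuclideanSpace ℝ (Fin 3)) = 2 + 1 := finrank_euclideanSpace_fin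
  constructor
  · rintro ⟨x, hxzw, hxA⟩ P hP hzP hwP
    exact P.inter_nonempty_of_inter_convexHull_nonempty hconn.isPreconnected (by rw [hP, hdim])
      ⟨x, P.convex.segment_subset hzP hwP hxzw, hxA⟩
  · intro hplanes
    by_contra hempty
    have hball : convexHull ℝ A ⊆ closedBall 0 1 :=
      convexHull_min (hA.trans sphere_subset_closedBall) (convex_closedBall 0 1)
    have hdisj : Disjoint (convexHull ℝ A) line[ℝ, z, w] := disjoint_left.mpr
      fun x hxA hxL => hempty
        ⟨x, affineSpan_pair_inter_closedBall_subset_segment hz hw ⟨hxL, hball hxA⟩, hxA⟩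
    obtain ⟨P, hP, hLP, hPA⟩ := line[ℝ, z, w].exists_hyperplane_le_disjoint
      (convex_convexHull ℝ A) hcomp.convexHull hconn.nonempty.convexHull
      (left_mem_affineSpan_pair ℝ z w) hdisj
    obtain ⟨a, haP, haA⟩ := hplanes P (by omega) (hLP (left_mem_affineSpan_pair ℝ z w))
      (hLP (right_mem_affineSpan_pair ℝ z w))
    exact hPA.ne_of_mem (subset_convexHull ℝ A haA) haP rfl

theorem segment_meets_convexHull_iff_planes_meet
    (A : Set (EuclideanSpace ℝ (Fin 3)))
    (hA : A ⊆ Metric.sphere (0 : EuclideanSpace ℝ (Fin 3)) 1)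
    (hne : A.Nonempty) (hcomp : IsCompact A) (hconn : IsConnected A)
    (z w : EuclideanSpace ℝ (Fin 3))
    (hz : z ∈ Metric.sphere (0 : EuclideanSpace ℝ (Fin 3)) 1)
    (hw : w ∈ Metric.sphere (0 : EuclideanSpace ℝ (Fin 3)) 1)
    (hzA : z ∉ A) (hwA : w ∉ A) (hzw : z ≠ w) :
    (segment ℝ z w ∩ convexHull ℝ A).Nonempty ↔
      ∀ P : AffineSubspace ℝ (EuclideanSpace ℝ (Fin 3)),
        Module.finrank ℝ P.direction = 2 → z ∈ P → w ∈ P →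
          ((P : Set (EuclideanSpace ℝ (Fin 3))) ∩ A).Nonempty :=
  segment_meets_convexHull_iff_planes_meet_general A hA hcomp hconn z w hz hw
end
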